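/- Let X and Y be independent B × d₂ random matrices with i.i.d. entries uniform on {-γ, γ}. Then P(|∑_{i=1}^{B} ∑_{j,k=1}^{d₂} X_{ij}Y_{ik}| ≥ γ²Bd₂²/8) ≤ 2exp(-cBd₂) for a universal constant c > 0. -/

import Mathlib

/-!
Write `S_i = ∑_j X_ij` and `T_i = ∑_k Y_ik`, so that the cross term is `W = ∑_i S_i T_i`.
Each `S_i, T_i` is a sum of `d₂` independent Rademacher variables scaled by `γ`, hence
sub-Gaussian with variance proxy `v = d₂ γ²` (Hoeffding's lemma). Conditioning on `T_i` gives
`E exp (t S_i T_i) ≤ E exp (v t² T_i² / 2)`, and writing `exp (a x²)` as a Gaussian integral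
over `g` of `exp (2 √a x g)` bounds the latter by `exp (t² v²)` as long as `t² v² ≤ 1/2`.
The rows are independent, so `E exp (t W) ≤ exp (B t² v²)`, and Chernoff's bound at
`t = 1 / (16 v)` on both tails gives `2 exp (-B d₂ / 256)`.
-/

open MeasureTheory ProbabilityTheory Real
open scoped ENNReal NNReal

lemma lintegral_exp_neg_mul_sq {b : ℝ} (hb : 0 < b) :
    ∫⁻ g : ℝ, ENNReal.ofReal (exp (-b * g ^ 2)) = ENNReal.ofReal √(π / b) := by
  rw [← integral_gaussian, ofReal_integral_eq_lintegral_ofReal (integrable_exp_neg_mul_sq hb)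
    (ae_of_all _ fun _ ↦ (exp_pos _).le)]

lemma lintegral_exp_neg_sq_add_mul (β : ℝ) :
    ∫⁻ g : ℝ, ENNReal.ofReal (exp (-g ^ 2 + β * g)) = ENNReal.ofReal (√π * exp (β ^ 2 / 4)) := by
  have hsq (g : ℝ) : exp (-g ^ 2 + β * g) = exp (β ^ 2 / 4) * exp (-1 * (g - β / 2) ^ 2) := by
    rw [← exp_add]; ring_nf
  simp_rw [hsq, ENNReal.ofReal_mul (exp_pos _).le]
  rw [lintegral_const_mul' _ _ ENNReal.ofReal_ne_top,
    lintegral_sub_right_eq_self (fun g ↦ ENNReal.ofReal (exp (-1 * g ^ 2))) (β / 2),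
    lintegral_exp_neg_mul_sq one_pos, div_one, mul_comm, ENNReal.ofReal_mul (sqrt_nonneg π)]

lemma sqrt_one_div_one_sub_two_mul_le_exp {b : ℝ} (hb₀ : 0 ≤ b) (hb : b ≤ 1 / 4) :
    √(1 / (1 - 2 * b)) ≤ exp (2 * b) := by
  rw [sqrt_le_iff, sq, ← exp_add, div_le_iff₀ (by linarith)]
  exact ⟨(exp_pos _).le, by nlinarith [add_one_le_exp (2 * b + 2 * b)]⟩

namespace ProbabilityTheory

variable {Ω : Type*} [MeasurableSpace Ω] {μ : Measure Ω}

lemma iIndepFun.curry {ι κ 𝓧 : Type*} [MeasurableSpace 𝓧] {X : ι → κ → Ω → 𝓧}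
    (hX : ∀ i j, Measurable (X i j)) (h : iIndepFun (fun p : ι × κ ↦ X p.1 p.2) μ) :
    iIndepFun (fun i ω j ↦ X i j ω) μ := by
  have := h.isProbabilityMeasure
  have (i : ι) (j : κ) : IsProbabilityMeasure (μ.map (X i j)) :=
    Measure.isProbabilityMeasure_map (hX i j).aemeasurable
  rw [iIndepFun_iff_map_fun_eq_infinitePi_map (fun i ↦ by fun_prop)]
  calc μ.map (fun ω i j ↦ X i j ω)
      = (μ.map fun ω (p : ι × κ) ↦ X p.1 p.2 ω).map (MeasurableEquiv.curry ι κ 𝓧) := by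
        rw [Measure.map_map (by fun_prop) (by fun_prop)]; rfl
    _ = Measure.infinitePi fun i ↦ Measure.infinitePi fun j ↦ μ.map (X i j) := by
        have hjoint : μ.map (fun ω (p : ι × κ) ↦ X p.1 p.2 ω) = _ :=
          h.map_fun_eq_infinitePi_map (fun p ↦ hX p.1 p.2)
        rw [hjoint]
        exact Measure.infinitePi_map_curry fun i j ↦ μ.map (X i j)
    _ = Measure.infinitePi fun i ↦ μ.map fun ω j ↦ X i j ω := by
        congr! with i
        exact ((h.precomp (g := fun j ↦ (i, j)) fun _ _ ↦ by simp).map_fun_eq_infinitePi_map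
          (hX i)).symm

section TwoPoint

variable [IsProbabilityMeasure μ] {f : Ω → ℝ} {γ : ℝ}

lemma ae_eq_or_eq_neg_of_measure_eq_half (hf : Measurable f) (hγ : γ ≠ 0)
    (h₁ : μ {ω | f ω = γ} = 1 / 2) (h₂ : μ {ω | f ω = -γ} = 1 / 2) :
    ∀ᵐ ω ∂μ, f ω = γ ∨ f ω = -γ := by
  have hdisj : Disjoint {ω | f ω = γ} {ω | f ω = -γ} :=
    Set.disjoint_left.2 fun ω (h : f ω = γ) (h' : f ω = -γ) ↦ hγ (by linarith)
  have hunion : μ ({ω | f ω = γ} ∪ {ω | f ω = -γ}) = 1 := by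
    rw [measure_union hdisj (hf (measurableSet_singleton _)), h₁, h₂, ENNReal.add_halves]
  exact ae_iff.2 <| (prob_compl_eq_zero_iff
    ((hf (measurableSet_singleton _)).union (hf (measurableSet_singleton _)))).2 hunion

lemma integral_eq_zero_of_measure_eq_half (hf : Measurable f) (hγ : γ ≠ 0)
    (h₁ : μ {ω | f ω = γ} = 1 / 2) (h₂ : μ {ω | f ω = -γ} = 1 / 2) :
    μ[f] = 0 := by
  set A := {ω | f ω = γ}
  have hA : MeasurableSet A := hf (measurableSet_singleton _)
  have hf_eq : f =ᵐ[μ] A.indicator (fun _ ↦ γ) + Aᶜ.indicator (fun _ ↦ -γ) := by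
    filter_upwards [ae_eq_or_eq_neg_of_measure_eq_half hf hγ h₁ h₂] with ω hω
    by_cases hωA : ω ∈ A
    · simp [hωA, show f ω = γ from hωA]
    · simp [hωA, hω.resolve_left hωA]
  have hA_half : μ.real A = 1 / 2 := by simp [measureReal_def, h₁]
  have hAc_half : μ.real Aᶜ = 1 / 2 := by
    rw [probReal_compl_eq_one_sub hA, hA_half]; norm_num
  rw [integral_congr_ae hf_eq, integral_add' ((integrable_const _).indicator hA)
    ((integrable_const _).indicator hA.compl), integral_indicator_const _ hA,
    integral_indicator_const _ hA.compl, hA_half, hAc_half]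
  simp

lemma hasSubgaussianMGF_of_measure_eq_half (hf : Measurable f) (hγ : γ ≠ 0)
    (h₁ : μ {ω | f ω = γ} = 1 / 2) (h₂ : μ {ω | f ω = -γ} = 1 / 2) :
    HasSubgaussianMGF f (‖γ‖₊ ^ 2) μ := by
  have hIcc : ∀ᵐ ω ∂μ, f ω ∈ Set.Icc (-|γ|) |γ| := by
    filter_upwards [ae_eq_or_eq_neg_of_measure_eq_half hf hγ h₁ h₂] with ω hω
    rcases hω with hω | hω <;> rw [hω] <;> constructor <;>
      linarith [neg_abs_le γ, le_abs_self γ]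
  convert hasSubgaussianMGF_of_mem_Icc_of_integral_eq_zero hf.aemeasurable hIcc
    (integral_eq_zero_of_measure_eq_half hf hγ h₁ h₂) using 2
  ext
  simp [abs_of_nonneg (add_nonneg (abs_nonneg γ) (abs_nonneg γ))]

end TwoPoint

lemma HasSubgaussianMGF.lintegral_exp_mul_le {X : Ω → ℝ} {c : ℝ≥0}
    (h : HasSubgaussianMGF X c μ) (t : ℝ) :
    ∫⁻ ω, ENNReal.ofReal (exp (t * X ω)) ∂μ ≤ ENNReal.ofReal (exp (c * t ^ 2 / 2)) := by
  rw [← ofReal_integral_eq_lintegral_ofReal (h.integrable_exp_mul t)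
    (ae_of_all _ fun _ ↦ (exp_pos _).le)]
  exact ENNReal.ofReal_le_ofReal (h.mgf_le t)

lemma HasSubgaussianMGF.lintegral_exp_mul_sq_le [SFinite μ] {T : Ω → ℝ} {c : ℝ≥0}
    (hT : Measurable T) (h : HasSubgaussianMGF T c μ) {a : ℝ} (ha : 0 ≤ a)
    (hac : a * c ≤ 1 / 4) :
    ∫⁻ ω, ENNReal.ofReal (exp (a * T ω ^ 2)) ∂μ ≤ ENNReal.ofReal (exp (2 * a * c)) := by
  -- Hubbard–Stratonovich: `√π exp (a x²) = ∫ exp (-g² + 2 √a x g) dg`.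
  have hlin (x : ℝ) : ENNReal.ofReal √π * ENNReal.ofReal (exp (a * x ^ 2)) =
      ∫⁻ g : ℝ, ENNReal.ofReal (exp (-g ^ 2 + 2 * √a * x * g)) := by
    rw [lintegral_exp_neg_sq_add_mul, ← ENNReal.ofReal_mul (sqrt_nonneg π)]
    congr 3
    rw [mul_pow, mul_pow, sq_sqrt ha]; ring
  have hinner (g : ℝ) : ∫⁻ ω, ENNReal.ofReal (exp (-g ^ 2 + 2 * √a * T ω * g)) ∂μ ≤
      ENNReal.ofReal (exp (-(1 - 2 * a * c) * g ^ 2)) := by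
    have hsplit (ω : Ω) : ENNReal.ofReal (exp (-g ^ 2 + 2 * √a * T ω * g)) =
        ENNReal.ofReal (exp (-g ^ 2)) * ENNReal.ofReal (exp ((2 * √a * g) * T ω)) := by
      rw [← ENNReal.ofReal_mul (exp_pos _).le, ← exp_add]; ring_nf
    calc ∫⁻ ω, ENNReal.ofReal (exp (-g ^ 2 + 2 * √a * T ω * g)) ∂μ
        = ENNReal.ofReal (exp (-g ^ 2)) *
            ∫⁻ ω, ENNReal.ofReal (exp ((2 * √a * g) * T ω)) ∂μ := by
          simp_rw [hsplit]; exact lintegral_const_mul' _ _ ENNReal.ofReal_ne_top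
      _ ≤ ENNReal.ofReal (exp (-g ^ 2)) * ENNReal.ofReal (exp (c * (2 * √a * g) ^ 2 / 2)) := by
          gcongr; exact h.lintegral_exp_mul_le _
      _ = ENNReal.ofReal (exp (-(1 - 2 * a * c) * g ^ 2)) := by
          rw [← ENNReal.ofReal_mul (exp_pos _).le, ← exp_add, mul_pow, mul_pow, sq_sqrt ha]
          ring_nf
  have hπ : ENNReal.ofReal √π ≠ 0 := by simp [pi_pos]
  refine (ENNReal.mul_le_mul_iff_right hπ ENNReal.ofReal_ne_top).1 ?_
  calc ENNReal.ofReal √π * ∫⁻ ω, ENNReal.ofReal (exp (a * T ω ^ 2)) ∂μ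
      = ∫⁻ g : ℝ, ∫⁻ ω, ENNReal.ofReal (exp (-g ^ 2 + 2 * √a * T ω * g)) ∂μ := by
        rw [← lintegral_const_mul' _ _ ENNReal.ofReal_ne_top]
        simp_rw [hlin]
        exact lintegral_lintegral_swap (by fun_prop)
    _ ≤ ∫⁻ g : ℝ, ENNReal.ofReal (exp (-(1 - 2 * a * c) * g ^ 2)) := lintegral_mono hinner
    _ = ENNReal.ofReal √(π / (1 - 2 * a * c)) := lintegral_exp_neg_mul_sq (by linarith)
    _ ≤ ENNReal.ofReal √π * ENNReal.ofReal (exp (2 * a * c)) := by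
        rw [← ENNReal.ofReal_mul (sqrt_nonneg π), div_eq_mul_one_div, sqrt_mul pi_pos.le,
          mul_assoc 2]
        gcongr
        exact sqrt_one_div_one_sub_two_mul_le_exp (mul_nonneg ha c.2) hac

lemma lintegral_exp_mul_mul_le_lintegral_exp_mul_sq [IsFiniteMeasure μ] {S T : Ω → ℝ}
    (hS : Measurable S) (hT : Measurable T) (hST : IndepFun S T μ) {c : ℝ≥0}
    (h : HasSubgaussianMGF S c μ) (t : ℝ) :
    ∫⁻ ω, ENNReal.ofReal (exp (t * (S ω * T ω))) ∂μ ≤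
      ∫⁻ ω, ENNReal.ofReal (exp (c * t ^ 2 / 2 * T ω ^ 2)) ∂μ := by
  have hjoint : μ.map (fun ω ↦ (S ω, T ω)) = (μ.map S).prod (μ.map T) :=
    (indepFun_iff_map_prod_eq_prod_map_map hS.aemeasurable hT.aemeasurable).1 hST
  calc ∫⁻ ω, ENNReal.ofReal (exp (t * (S ω * T ω))) ∂μ
      = ∫⁻ p, ENNReal.ofReal (exp (t * (p.1 * p.2))) ∂μ.map fun ω ↦ (S ω, T ω) :=
        (lintegral_map (f := fun p : ℝ × ℝ ↦ ENNReal.ofReal (exp (t * (p.1 * p.2))))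
          (g := fun ω ↦ (S ω, T ω)) (by fun_prop) (by fun_prop)).symm
    _ = ∫⁻ y, ∫⁻ x, ENNReal.ofReal (exp (t * (x * y))) ∂μ.map S ∂μ.map T := by
        rw [hjoint]; exact lintegral_prod_symm' _ (by fun_prop)
    _ ≤ ∫⁻ y, ENNReal.ofReal (exp (c * t ^ 2 / 2 * y ^ 2)) ∂μ.map T := by
        refine lintegral_mono fun y ↦ ?_
        rw [lintegral_map (by fun_prop) hS]
        convert h.lintegral_exp_mul_le (t * y) using 4 <;> ring_nf
    _ = ∫⁻ ω, ENNReal.ofReal (exp (c * t ^ 2 / 2 * T ω ^ 2)) ∂μ :=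
        lintegral_map (by fun_prop) hT

lemma lintegral_exp_mul_mul_le_of_indepFun [IsProbabilityMeasure μ] {S T : Ω → ℝ}
    (hS : Measurable S) (hT : Measurable T) (hST : IndepFun S T μ) {cS cT : ℝ≥0}
    (hSc : HasSubgaussianMGF S cS μ) (hTc : HasSubgaussianMGF T cT μ) {t : ℝ}
    (ht : t ^ 2 * cS * cT ≤ 1 / 2) :
    ∫⁻ ω, ENNReal.ofReal (exp (t * (S ω * T ω))) ∂μ ≤ ENNReal.ofReal (exp (t ^ 2 * cS * cT)) :=
  calc ∫⁻ ω, ENNReal.ofReal (exp (t * (S ω * T ω))) ∂μ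
      ≤ ∫⁻ ω, ENNReal.ofReal (exp (cS * t ^ 2 / 2 * T ω ^ 2)) ∂μ :=
        lintegral_exp_mul_mul_le_lintegral_exp_mul_sq hS hT hST hSc t
    _ ≤ ENNReal.ofReal (exp (2 * (cS * t ^ 2 / 2) * cT)) :=
        hTc.lintegral_exp_mul_sq_le hT (by positivity) (by linarith)
    _ = ENNReal.ofReal (exp (t ^ 2 * cS * cT)) := by ring_nf

lemma lintegral_exp_mul_sum_le_of_iIndepFun {ι : Type*} {V : ι → Ω → ℝ}
    (hV : iIndepFun V μ) (hVm : ∀ i, Measurable (V i)) (s : Finset ι) {t : ℝ} {K : ι → ℝ}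
    (hK : ∀ i ∈ s, ∫⁻ ω, ENNReal.ofReal (exp (t * V i ω)) ∂μ ≤ ENNReal.ofReal (exp (K i))) :
    ∫⁻ ω, ENNReal.ofReal (exp (t * ∑ i ∈ s, V i ω)) ∂μ ≤ ENNReal.ofReal (exp (∑ i ∈ s, K i)) := by
  have hprod (x : ι → ℝ) : ENNReal.ofReal (exp (∑ i ∈ s, x i)) =
      ∏ i ∈ s, ENNReal.ofReal (exp (x i)) := by
    rw [exp_sum, ENNReal.ofReal_prod_of_nonneg fun i _ ↦ (exp_pos _).le]
  simp_rw [Finset.mul_sum, hprod]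
  rw [lintegral_prod_eq_prod_lintegral_of_indepFun s (fun i ω ↦ ENNReal.ofReal (exp (t * V i ω)))
    (hV.comp (fun _ x ↦ ENNReal.ofReal (exp (t * x))) fun _ ↦ by fun_prop) fun i ↦ by fun_prop]
  exact Finset.prod_le_prod' hK

lemma measure_ge_le_exp_mul_lintegral_exp {X : Ω → ℝ} (hX : AEMeasurable X μ) {t : ℝ}
    (ht : 0 ≤ t) (ε : ℝ) :
    μ {ω | ε ≤ X ω} ≤
      ENNReal.ofReal (exp (-(t * ε))) * ∫⁻ ω, ENNReal.ofReal (exp (t * X ω)) ∂μ :=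
  calc μ {ω | ε ≤ X ω}
      ≤ μ {ω | ENNReal.ofReal (exp (t * ε)) ≤ ENNReal.ofReal (exp (t * X ω))} :=
        measure_mono fun ω (hω : ε ≤ X ω) ↦
          ENNReal.ofReal_le_ofReal (exp_le_exp.2 (mul_le_mul_of_nonneg_left hω ht))
    _ ≤ (∫⁻ ω, ENNReal.ofReal (exp (t * X ω)) ∂μ) / ENNReal.ofReal (exp (t * ε)) :=
        meas_ge_le_lintegral_div (by fun_prop) (by simp [exp_pos]) ENNReal.ofReal_ne_top
    _ = ENNReal.ofReal (exp (-(t * ε))) * ∫⁻ ω, ENNReal.ofReal (exp (t * X ω)) ∂μ := by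
        rw [ENNReal.div_eq_inv_mul, ← ENNReal.ofReal_inv_of_pos (exp_pos _), exp_neg]

lemma measure_abs_ge_le_of_lintegral_exp_le {X : Ω → ℝ} (hX : AEMeasurable X μ) {t R : ℝ}
    (ht : 0 ≤ t) (ε : ℝ) (hpos : ∫⁻ ω, ENNReal.ofReal (exp (t * X ω)) ∂μ ≤ ENNReal.ofReal R)
    (hneg : ∫⁻ ω, ENNReal.ofReal (exp (-t * X ω)) ∂μ ≤ ENNReal.ofReal R) :
    μ {ω | ε ≤ |X ω|} ≤ 2 * ENNReal.ofReal (exp (-(t * ε)) * R) := by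
  have hneg' : ∫⁻ ω, ENNReal.ofReal (exp (t * -X ω)) ∂μ ≤ ENNReal.ofReal R := by
    simpa only [mul_neg, neg_mul] using hneg
  have hunion : {ω | ε ≤ |X ω|} = {ω | ε ≤ X ω} ∪ {ω | ε ≤ -X ω} := by
    ext ω; exact le_abs (a := ε) (b := X ω)
  calc μ {ω | ε ≤ |X ω|}
      ≤ μ {ω | ε ≤ X ω} + μ {ω | ε ≤ -X ω} := hunion ▸ measure_union_le _ _
    _ ≤ ENNReal.ofReal (exp (-(t * ε))) * ENNReal.ofReal R +
          ENNReal.ofReal (exp (-(t * ε))) * ENNReal.ofReal R := by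
        gcongr
        · exact (measure_ge_le_exp_mul_lintegral_exp hX ht ε).trans (by gcongr)
        · exact (measure_ge_le_exp_mul_lintegral_exp hX.neg ht ε).trans (by gcongr; exact hneg')
    _ = 2 * ENNReal.ofReal (exp (-(t * ε)) * R) := by
        rw [← two_mul, ENNReal.ofReal_mul (exp_pos _).le]

end ProbabilityTheory

lemma lintegral_exp_mul_sum_rowSum_mul_rowSum_le {Ω : Type*} [MeasurableSpace Ω]
    {μ : Measure Ω} [IsProbabilityMeasure μ] {B d : ℕ} {γ : ℝ} (hγ : γ ≠ 0)
    {Z : Fin 2 → Fin B → Fin d → Ω → ℝ} (hmeas : ∀ a i j, Measurable (Z a i j))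
    (hindep : iIndepFun (fun (p : Fin 2 × Fin B × Fin d) ω ↦ Z p.1 p.2.1 p.2.2 ω) μ)
    (hlaw : ∀ a i j, μ {ω | Z a i j ω = γ} = 1 / 2 ∧ μ {ω | Z a i j ω = -γ} = 1 / 2)
    {t : ℝ} (ht : t ^ 2 * (d * γ ^ 2) ^ 2 ≤ 1 / 2) :
    ∫⁻ ω, ENNReal.ofReal (exp (t * ∑ i, (∑ j, Z 0 i j ω) * ∑ k, Z 1 i k ω)) ∂μ ≤
      ENNReal.ofReal (exp (B * (t ^ 2 * (d * γ ^ 2) ^ 2))) := by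
  have hrow (a : Fin 2) (i : Fin B) :
      HasSubgaussianMGF (fun ω ↦ ∑ j, Z a i j ω) (∑ _j : Fin d, ‖γ‖₊ ^ 2) μ :=
    HasSubgaussianMGF.sum_of_iIndepFun
      (hindep.precomp (g := fun j ↦ (a, i, j)) fun _ _ h ↦ by simpa using h)
      fun j _ ↦ hasSubgaussianMGF_of_measure_eq_half (hmeas a i j) hγ (hlaw a i j).1 (hlaw a i j).2
  have hrow_param : ((∑ _j : Fin d, ‖γ‖₊ ^ 2 : ℝ≥0) : ℝ) = d * γ ^ 2 := by simp
  have hST (i : Fin B) : IndepFun (fun ω ↦ ∑ j, Z 0 i j ω) (fun ω ↦ ∑ k, Z 1 i k ω) μ := by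
    have hblocks : iIndepFun (fun a ω j ↦ Z a i j ω) μ :=
      iIndepFun.curry (X := fun a j ↦ Z a i j) (fun a j ↦ hmeas a i j)
        (hindep.precomp (g := fun p : Fin 2 × Fin d ↦ (p.1, i, p.2))
          fun _ _ h ↦ by simp_all [Prod.ext_iff])
    exact (hblocks.indepFun zero_ne_one).comp (φ := fun x ↦ ∑ j, x j) (ψ := fun x ↦ ∑ k, x k)
      (by fun_prop) (by fun_prop)
  have hrows : iIndepFun (fun i ω ↦ (∑ j, Z 0 i j ω) * ∑ k, Z 1 i k ω) μ := by
    have hblocks : iIndepFun (fun i ω (q : Fin 2 × Fin d) ↦ Z q.1 i q.2 ω) μ :=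
      iIndepFun.curry (X := fun i (q : Fin 2 × Fin d) ↦ Z q.1 i q.2) (fun i q ↦ hmeas q.1 i q.2)
        (hindep.precomp (g := fun q : Fin B × Fin 2 × Fin d ↦ (q.2.1, q.1, q.2.2))
          fun _ _ h ↦ by simp_all [Prod.ext_iff])
    exact hblocks.comp (fun _ x ↦ (∑ j, x (0, j)) * ∑ k, x (1, k)) fun _ ↦ by fun_prop
  calc ∫⁻ ω, ENNReal.ofReal (exp (t * ∑ i, (∑ j, Z 0 i j ω) * ∑ k, Z 1 i k ω)) ∂μ
      ≤ ENNReal.ofReal (exp (∑ _i : Fin B, t ^ 2 * (d * γ ^ 2) ^ 2)) := by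
        refine lintegral_exp_mul_sum_le_of_iIndepFun hrows (fun i ↦ by fun_prop) _ fun i _ ↦ ?_
        convert lintegral_exp_mul_mul_le_of_indepFun (t := t) (by fun_prop) (by fun_prop) (hST i)
          (hrow 0 i) (hrow 1 i) (by rw [hrow_param]; linarith) using 3
        rw [hrow_param]; ring
    _ = ENNReal.ofReal (exp (B * (t ^ 2 * (d * γ ^ 2) ^ 2))) := by simp

/-- For independent `B × d₂` matrices `X, Y` with i.i.d. entries uniform on `{-γ, γ}`,
`P(|∑_{i,j,k} X_{ij} Y_{ik}| ≥ γ² B d₂² / 8) ≤ 2 exp(-c B d₂)`. -/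
theorem cross_term_XY_bound :
    ∃ c : ℝ, 0 < c ∧
      ∀ (Ω : Type) (_ : MeasurableSpace Ω) (μ : Measure Ω), IsProbabilityMeasure μ →
        ∀ (B d₂ : ℕ), 0 < B → 0 < d₂ →
          ∀ (γ : ℝ), 0 < γ →
            ∀ (Z : Fin 2 → Fin B → Fin d₂ → Ω → ℝ),
              (∀ a i j, Measurable (Z a i j)) →
              iIndepFun
                (fun (p : Fin 2 × Fin B × Fin d₂) ω => Z p.1 p.2.1 p.2.2 ω) μ →
              (∀ a i j, μ {ω | Z a i j ω = γ} = 1/2 ∧ μ {ω | Z a i j ω = -γ} = 1/2) →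
              μ {ω | γ ^ 2 * B * (d₂ : ℝ) ^ 2 / 8 ≤
                  |∑ i : Fin B, ∑ j : Fin d₂, ∑ k : Fin d₂, Z 0 i j ω * Z 1 i k ω|} ≤
                ENNReal.ofReal (2 * Real.exp (-(c * B * d₂))) := by
  refine ⟨1 / 256, by norm_num, fun Ω _ μ _ B d₂ _ hd₂ γ hγ Z hmeas hindep hlaw ↦ ?_⟩
  set v : ℝ := d₂ * γ ^ 2 with hv_def
  have hv : 0 < v := by positivity
  set t : ℝ := 1 / (16 * v) with ht_def
  have ht : t ^ 2 * v ^ 2 = 1 / 256 := by rw [ht_def]; field_simp; norm_num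
  have htε : t * (γ ^ 2 * B * d₂ ^ 2 / 8) = B * d₂ / 128 := by
    rw [ht_def, hv_def]; field_simp; ring
  have hmgf (s : ℝ) (hs : s ^ 2 = t ^ 2) :
      ∫⁻ ω, ENNReal.ofReal (exp (s * ∑ i, (∑ j, Z 0 i j ω) * ∑ k, Z 1 i k ω)) ∂μ ≤
        ENNReal.ofReal (exp (B * (t ^ 2 * v ^ 2))) := by
    rw [← hs]
    exact lintegral_exp_mul_sum_rowSum_mul_rowSum_le hγ.ne' hmeas hindep hlaw
      (by rw [hs, ht]; norm_num)
  simp_rw [← Finset.sum_mul_sum]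
  refine (measure_abs_ge_le_of_lintegral_exp_le (by fun_prop) (by positivity) _
    (hmgf t rfl) (hmgf (-t) (neg_sq t))).trans ?_
  rw [ENNReal.ofReal_mul zero_le_two, ENNReal.ofReal_ofNat]
  gcongr
  rw [← exp_add, ht, htε, exp_le_exp]
  have : (1 : ℝ) ≤ d₂ := by exact_mod_cast hd₂
  nlinarith [(B.cast_nonneg : (0 : ℝ) ≤ B)]
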